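/- arXiv:2112.00211 — 3 statements merged into one kernel-verified Lean document; each statement's English description precedes it below -/
import Mathlib

section
/- Let (𝒞, J) be a category with a terminal object 1 equipped with a Grothendieck topology, let C be an object of 𝒞, and let p : 1 ⟶ C be a point of C admitting at least one 𝔊-neighborhood. Then the collection 𝒩_p(C) of all cover-neighborhoods of p satisfies: (i) if S ∈ 𝒩_p(C) and R is a sieve on C with S ⊆ R, then R ∈ 𝒩_p(C); (ii) every finite intersection of sieves in 𝒩_p(C) belongs to 𝒩_p(C); (iii) the empty sieve is not in 𝒩_p(C). -/
open CategoryTheory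

universe v u

/-- A filter on a category `C`: an assignment of a collection of sieves to each object,
upward closed, closed under finite intersections (top and binary), stable under pullback,
and not containing the empty sieve. -/
structure CatFilter (C : Type u) [Category.{v} C] : Type max u v where
  sieves : ∀ X : C, Set (Sieve X)
  mem_of_le : ∀ {X : C} {S R : Sieve X}, S ∈ sieves X → S ≤ R → R ∈ sieves X
  top_mem : ∀ X : C, ⊤ ∈ sieves X
  inter_mem : ∀ {X : C} {S R : Sieve X}, S ∈ sieves X → R ∈ sieves X → S ⊓ R ∈ sieves X
  pullback_mem : ∀ {X Y : C} (h : Y ⟶ X) {S : Sieve X}, S ∈ sieves X → S.pullback h ∈ sieves Y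
  bot_not_mem : ∀ X : C, ⊥ ∉ sieves X

variable {C : Type u} [Category.{v} C]

/-- `G` is finer than `F` if `F(X) ⊆ G(X)` for all objects `X`. -/
def CatFilter.Finer (G F : CatFilter C) : Prop := ∀ X : C, F.sieves X ⊆ G.sieves X

/-- An ultrafilter is a filter with no strictly finer filter. -/
def CatFilter.IsUltra (U : CatFilter C) : Prop :=
  ∀ G : CatFilter C, G.Finer U → U.Finer G

open CategoryTheory.Limits

/-- `V` is a `𝔊`-neighborhood of a point `p : T ⟶ X` (with `T` terminal): `V` is a covering
sieve and there are `φ : D ⟶ X` in `V` and a point `q : T ⟶ D` with `φ ∘ q = p`. -/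
def IsGNbhd (J : GrothendieckTopology C) {T X : C} (p : T ⟶ X) (V : Sieve X) : Prop :=
  V ∈ J X ∧ ∃ (D : C) (φ : D ⟶ X) (q : T ⟶ D), V.arrows φ ∧ q ≫ φ = p

/-- A cover-neighborhood of `p` is a sieve containing a `𝔊`-neighborhood of `p`. -/
def IsCoverNbhd (J : GrothendieckTopology C) {T X : C} (p : T ⟶ X) (S : Sieve X) : Prop :=
  ∃ V : Sieve X, IsGNbhd J p V ∧ V ≤ S

/-- `𝒩_p(X)`: the set of all cover-neighborhoods of `p`. -/
def Nbhds (J : GrothendieckTopology C) {T X : C} (p : T ⟶ X) : Set (Sieve X) :=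
  {S | IsCoverNbhd J p S}

/-- `𝔉(X)` converges to `p` if `𝒩_p(X) ⊆ 𝔉(X)`. -/
def FilterConverges (J : GrothendieckTopology C) (F : CatFilter C) {T X : C}
    (p : T ⟶ X) : Prop :=
  Nbhds J p ⊆ F.sieves X

/-- `p` lies in the closure of the sieve `A` if every cover-neighborhood of `p` meets `A`. -/
def InClosure (J : GrothendieckTopology C) {T X : C} (p : T ⟶ X) (A : Sieve X) : Prop :=
  ∀ S ∈ Nbhds J p, ∃ (D : C) (f : D ⟶ X), S.arrows f ∧ A.arrows f

/-- `p` is a cluster point of `𝔉(X)` if it lies in the closure of every sieve of `𝔉(X)`. -/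
def IsClusterPt (J : GrothendieckTopology C) (F : CatFilter C) {T X : C}
    (p : T ⟶ X) : Prop :=
  ∀ A ∈ F.sieves X, InClosure J p A

/-- The collection of all cover-neighborhoods of a point admitting at least one
`𝔊`-neighborhood is upward closed, closed under finite intersections, and does not contain
the empty sieve. -/
theorem nbhds_filtered (J : GrothendieckTopology C) {T : C} (hT : IsTerminal T) {X : C}
    (p : T ⟶ X) (hp : ∃ V : Sieve X, IsGNbhd J p V) :
    (∀ S R : Sieve X, S ∈ Nbhds J p → S ≤ R → R ∈ Nbhds J p) ∧
    (∀ (n : ℕ) (S : Fin n → Sieve X), (∀ i, S i ∈ Nbhds J p) → (⨅ i, S i) ∈ Nbhds J p) ∧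
    (⊥ : Sieve X) ∉ Nbhds J p := by
  refine ⟨?_, ?_, ?_⟩
  · rintro S R ⟨V, hV, hVS⟩ hSR
    exact ⟨V, hV, hVS.trans hSR⟩
  · intro n S hS
    choose V hV hVle using hS
    have harr : ∀ i, (V i).arrows p := fun i => by
      obtain ⟨_, ⟨D, φ, q, hφ, hq⟩⟩ := hV i
      simpa [hq] using (V i).downward_closed hφ q
    have hVcov : ∀ i, V i ∈ J X := fun i => (hV i).1
    refine ⟨⨅ i, V i, ⟨?_, T, p, 𝟙 T, ?_, by simp⟩, iInf_mono hVle⟩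
    · -- covering
      clear harr hVle hp S hV
      induction n with
      | zero => simpa [iInf_of_empty] using J.top_mem X
      | succ n ih =>
        have hsplit : (⨅ i, V i) = V 0 ⊓ ⨅ i : Fin n, V i.succ := by
          apply le_antisymm
          · exact le_inf (iInf_le _ 0) (le_iInf fun i => iInf_le _ i.succ)
          · refine le_iInf fun i => ?_
            refine Fin.cases ?_ ?_ i
            · exact inf_le_left
            · exact fun j => inf_le_right.trans (iInf_le _ j)
        rw [hsplit]
        exact J.intersection_covering (hVcov 0) (ih _ (fun i => hVcov i.succ))
    · -- p is in the infimum
      show (⨅ i, V i).arrows p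
      simp only [iInf, Sieve.sInf_apply]
      rintro S ⟨i, rfl⟩
      exact harr i
  · rintro ⟨V, ⟨_, D, φ, q, hφ, _⟩, hle⟩
    exact (hle _ hφ : (⊥ : Sieve X).arrows φ)
end

section
/- Let (L, J) be a locale equipped with a Grothendieck topology, let 𝔉 be an S-filter on L, let k ∈ L, and let p be a point of L with k ∈ p⁻¹(0). Then p is a cluster point of 𝔉(k) if and only if there exists an S-filter 𝒢 on L finer than 𝔉 such that 𝒢(k) converges to p. -/
universe u

variable {L : Type u} [Order.Frame L]

/-- A sieve on `k` in a locale `L`: a downward-closed subset of `↓k = {x : x ≤ k}`. -/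
def IsLSieve (k : L) (S : Set L) : Prop :=
  (∀ x ∈ S, x ≤ k) ∧ ∀ x ∈ S, ∀ y : L, y ≤ x → y ∈ S

/-- A Grothendieck topology on a locale `L`. -/
structure LGrothendieckTopology (L : Type u) [Order.Frame L] : Type u where
  sieves : L → Set (Set L)
  sieve_mem : ∀ (k : L) (S : Set L), S ∈ sieves k → IsLSieve k S
  top_mem : ∀ k : L, Set.Iic k ∈ sieves k
  stable : ∀ (k : L) (S : Set L), S ∈ sieves k → ∀ m ≤ k, S ∩ Set.Iic m ∈ sieves m
  trans : ∀ (k : L) (S : Set L), S ∈ sieves k → ∀ R : Set L, IsLSieve k R →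
    (∀ m ∈ S, R ∩ Set.Iic m ∈ sieves m) → R ∈ sieves k

/-- An `S`-filter on a locale `L`: an assignment of collections of sieves, upward closed (among
sieves), closed under finite intersections (top and binary), satisfying the restriction
property, and not containing the empty sieve. -/
structure LSFilter (L : Type u) [Order.Frame L] : Type u where
  sieves : L → Set (Set L)
  sieve_mem : ∀ (k : L) (S : Set L), S ∈ sieves k → IsLSieve k S
  mem_of_subset : ∀ (k : L) (S : Set L), S ∈ sieves k → ∀ R : Set L, IsLSieve k R →
    S ⊆ R → R ∈ sieves k
  top_mem : ∀ k : L, Set.Iic k ∈ sieves k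
  inter_mem : ∀ (k : L) (S T : Set L), S ∈ sieves k → T ∈ sieves k → S ∩ T ∈ sieves k
  stable : ∀ (k : L) (S : Set L), S ∈ sieves k → ∀ m ≤ k, S ∩ Set.Iic m ∈ sieves m
  empty_not_mem : ∀ k : L, ∅ ∉ sieves k

/-- `G` is finer than `F` if `F(k) ⊆ G(k)` for all `k`. -/
def LSFilter.Finer (G F : LSFilter L) : Prop := ∀ k : L, F.sieves k ⊆ G.sieves k

/-- An `S`-ultrafilter is an `S`-filter with no strictly finer `S`-filter. -/
def LSFilter.IsUltra (U : LSFilter L) : Prop :=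
  ∀ G : LSFilter L, G.Finer U → U.Finer G

/-- The kernel `p⁻¹(0)` of a point `p : L → 2` of the locale `L` (realized as a frame
homomorphism into the frame `Prop`). -/
def LKernel (p : FrameHom L Prop) : Set L := {x : L | ¬ p x}

/-- For `k ∈ p⁻¹(0)`, a sieve `V ∈ J(k)` is a `𝔊`-neighborhood of the point `p` if
`V ⊆ p⁻¹(0)`. -/
def IsLGNbhd (J : LGrothendieckTopology L) (k : L) (p : FrameHom L Prop) (V : Set L) : Prop :=
  k ∈ LKernel p ∧ V ∈ J.sieves k ∧ V ⊆ LKernel p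

/-- A cover-neighborhood of `p` at `k` is a sieve on `k` containing a `𝔊`-neighborhood
of `p`. -/
def IsLCoverNbhd (J : LGrothendieckTopology L) (k : L) (p : FrameHom L Prop)
    (S : Set L) : Prop :=
  IsLSieve k S ∧ ∃ V : Set L, IsLGNbhd J k p V ∧ V ⊆ S

/-- `𝒩_p(k)`: the set of all cover-neighborhoods of `p` at `k`. -/
def LNbhds (J : LGrothendieckTopology L) (k : L) (p : FrameHom L Prop) : Set (Set L) :=
  {S | IsLCoverNbhd J k p S}

/-- `𝔉(k)` converges to `p` if `𝒩_p(k) ⊆ 𝔉(k)`. -/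
def LConverges (J : LGrothendieckTopology L) (F : LSFilter L) (k : L)
    (p : FrameHom L Prop) : Prop :=
  LNbhds J k p ⊆ F.sieves k

/-- `p` lies in the closure of the sieve `A` on `k` if every cover-neighborhood of `p` at `k`
meets `A`. -/
def LInClosure (J : LGrothendieckTopology L) (k : L) (A : Set L)
    (p : FrameHom L Prop) : Prop :=
  ∀ S ∈ LNbhds J k p, (S ∩ A).Nonempty

/-- `p` is a cluster point of `𝔉(k)` if it lies in the closure of every sieve of `𝔉(k)`. -/
def LIsClusterPt (J : LGrothendieckTopology L) (F : LSFilter L) (k : L)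
    (p : FrameHom L Prop) : Prop :=
  ∀ A ∈ F.sieves k, LInClosure J k A p

lemma bot_mem_of_sieve {k : L} {S : Set L} (hS : IsLSieve k S) (hne : S.Nonempty) :
    (⊥ : L) ∈ S := by
  obtain ⟨x, hx⟩ := hne
  exact hS.2 x hx ⊥ bot_le

lemma inter_sieve {k : L} {S T : Set L} (hS : IsLSieve k S) (hT : IsLSieve k T) :
    IsLSieve k (S ∩ T) :=
  ⟨fun x hx => hS.1 x hx.1, fun x hx y hy => ⟨hS.2 x hx.1 y hy, hT.2 x hx.2 y hy⟩⟩

lemma grothendieck_inter (J : LGrothendieckTopology L) {k : L} {V W : Set L}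
    (hV : V ∈ J.sieves k) (hW : W ∈ J.sieves k) : V ∩ W ∈ J.sieves k := by
  refine J.trans k V hV (V ∩ W)
    (inter_sieve (J.sieve_mem k V hV) (J.sieve_mem k W hW)) ?_
  intro m hm
  have h1 : (V ∩ W) ∩ Set.Iic m = W ∩ Set.Iic m := by
    ext x
    constructor
    · rintro ⟨⟨-, h2⟩, h3⟩; exact ⟨h2, h3⟩
    · rintro ⟨h2, h3⟩
      exact ⟨⟨(J.sieve_mem k V hV).2 m hm x h3, h2⟩, h3⟩
  rw [h1]
  exact J.stable k W hW m ((J.sieve_mem k V hV).1 m hm)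

/-- `p` is a cluster point of `𝔉(k)` iff there is an `S`-filter `𝒢` finer than `𝔉` such
that `𝒢(k)` converges to `p`. -/
theorem lIsClusterPt_iff_exists_finer_converges (J : LGrothendieckTopology L) (F : LSFilter L)
    (k : L) (p : FrameHom L Prop) (hk : k ∈ LKernel p) :
    LIsClusterPt J F k p ↔
      ∃ G : LSFilter L, G.Finer F ∧ LConverges J G k p := by

  constructor
  · intro h
    -- Build G generated by F and the cover-neighborhoods of p at k.
    have hbotN : ∀ N ∈ LNbhds J k p, (⊥ : L) ∈ N := by
      intro N hN
      have := h (Set.Iic k) (F.top_mem k) N hN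
      exact bot_mem_of_sieve hN.1 ⟨this.choose, this.choose_spec.1⟩
    refine ⟨⟨fun m => setOf (fun R => IsLSieve m R ∧ ∃ S ∈ F.sieves m,
        ∃ N, (N ∈ LNbhds J k p ∨ N = Set.univ) ∧ S ∩ N ⊆ R),
      fun m R hR => hR.1, ?_, ?_, ?_, ?_, ?_⟩, ?_, ?_⟩
    · rintro m S ⟨-, S', hS', N, hN, hsub⟩ R hR hSR
      exact ⟨hR, S', hS', N, hN, fun x hx => hSR (hsub hx)⟩
    · intro m
      exact ⟨⟨fun x hx => hx, fun x hx y hy => le_trans hy hx⟩, Set.Iic m, F.top_mem m,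
        Set.univ, Or.inr rfl, fun x hx => hx.1⟩
    · rintro m R T ⟨hR, S1, hS1, N1, hN1, h1⟩ ⟨hT, S2, hS2, N2, hN2, h2⟩
      refine ⟨inter_sieve hR hT, S1 ∩ S2, F.inter_mem m S1 S2 hS1 hS2, N1 ∩ N2, ?_, ?_⟩
      · rcases hN1 with hN1 | rfl
        · rcases hN2 with hN2 | rfl
          · left
            refine ⟨inter_sieve hN1.1 hN2.1, ?_⟩
            obtain ⟨V1, hV1, hV1s⟩ := hN1.2
            obtain ⟨V2, hV2, hV2s⟩ := hN2.2
            exact ⟨V1 ∩ V2, ⟨hk, grothendieck_inter J hV1.2.1 hV2.2.1,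
              fun x hx => hV1.2.2 hx.1⟩, fun x hx => ⟨hV1s hx.1, hV2s hx.2⟩⟩
          · left; simpa using hN1
        · rcases hN2 with hN2 | rfl
          · left; simpa using hN2
          · right; simp
      · rintro x ⟨⟨hx1, hx2⟩, hxn1, hxn2⟩
        exact ⟨h1 ⟨hx1, hxn1⟩, h2 ⟨hx2, hxn2⟩⟩
    · rintro m R ⟨hR, S, hS, N, hN, hsub⟩ m' hm'
      refine ⟨⟨fun x hx => hx.2, fun x hx y hy =>
        ⟨hR.2 x hx.1 y hy, le_trans hy hx.2⟩⟩, S ∩ Set.Iic m', F.stable m S hS m' hm',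
        N, hN, ?_⟩
      rintro x ⟨⟨hxS, hxm'⟩, hxN⟩
      exact ⟨hsub ⟨hxS, hxN⟩, hxm'⟩
    · rintro m ⟨-, S, hS, N, hN, hsub⟩
      have hSne : S.Nonempty := by
        rcases Set.eq_empty_or_nonempty S with rfl | hne
        · exact absurd hS (F.empty_not_mem m)
        · exact hne
      have hbS : (⊥ : L) ∈ S := bot_mem_of_sieve (F.sieve_mem m S hS) hSne
      have hbN : (⊥ : L) ∈ N := by
        rcases hN with hN | rfl
        · exact hbotN N hN
        · trivial
      exact hsub ⟨hbS, hbN⟩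
    · intro m S hS
      exact ⟨F.sieve_mem m S hS, S, hS, Set.univ, Or.inr rfl, fun x hx => hx.1⟩
    · intro N hN
      exact ⟨hN.1, Set.Iic k, F.top_mem k, N, Or.inl hN, fun x hx => hx.2⟩
  · rintro ⟨G, hGF, hconv⟩ A hA S hS
    have h1 : S ∩ A ∈ G.sieves k := G.inter_mem k S A (hconv hS) (hGF k hA)
    rcases Set.eq_empty_or_nonempty (S ∩ A) with he | hne
    · rw [he] at h1
      exact absurd h1 (G.empty_not_mem k)
    · exact hne
end

section
/- Let (L, J) be a locale equipped with a Grothendieck topology, let k ∈ L, and let A be a sieve on k. A point p of L with k ∈ p⁻¹(0) lies in the closure of A if and only if there exists an S-filter 𝒢 on L such that A ∈ 𝒢(k) and 𝒢(k) converges to p. -/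
universe u

variable {L : Type u} [Order.Frame L]

/-- The kernel of a point is downward closed. -/
lemma lKernel_down (p : FrameHom L Prop) {x y : L} (hx : x ∈ LKernel p) (hyx : y ≤ x) :
    y ∈ LKernel p := fun hy => hx ((OrderHomClass.mono p hyx : p y → p x) hy)

/-- `↓k` is a cover-neighborhood of `p` at `k` when `k ∈ p⁻¹(0)`. -/
lemma iic_mem_lNbhds (J : LGrothendieckTopology L) (k : L) (p : FrameHom L Prop)
    (hk : k ∈ LKernel p) : Set.Iic k ∈ LNbhds J k p := by
  refine ⟨⟨fun x hx => hx, fun x hx y hy => le_trans hy hx⟩,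
    Set.Iic k, ⟨hk, J.top_mem k, fun x hx => lKernel_down p hk hx⟩, subset_rfl⟩

/-- Cover-neighborhoods are closed under binary intersection. -/
lemma lNbhds_inter (J : LGrothendieckTopology L) (k : L) (p : FrameHom L Prop)
    {S T : Set L} (hS : S ∈ LNbhds J k p) (hT : T ∈ LNbhds J k p) :
    S ∩ T ∈ LNbhds J k p := by
  obtain ⟨hSsieve, V, ⟨hkp, hVJ, hVker⟩, hVS⟩ := hS
  obtain ⟨hTsieve, W, ⟨_, hWJ, hWker⟩, hWT⟩ := hT
  have hVsieve := J.sieve_mem k V hVJ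
  have hWsieve := J.sieve_mem k W hWJ
  have hVWsieve : IsLSieve k (V ∩ W) :=
    ⟨fun x hx => hVsieve.1 x hx.1,
     fun x hx y hy => ⟨hVsieve.2 x hx.1 y hy, hWsieve.2 x hx.2 y hy⟩⟩
  have hVW : V ∩ W ∈ J.sieves k := by
    refine J.trans k V hVJ (V ∩ W) hVWsieve (fun m hm => ?_)
    have : (V ∩ W) ∩ Set.Iic m = W ∩ Set.Iic m := by
      ext x
      constructor
      · rintro ⟨⟨_, hxW⟩, hxm⟩; exact ⟨hxW, hxm⟩
      · rintro ⟨hxW, hxm⟩; exact ⟨⟨hVsieve.2 m hm x hxm, hxW⟩, hxm⟩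
    rw [this]
    exact J.stable k W hWJ m (hVsieve.1 m hm)
  refine ⟨⟨fun x hx => hSsieve.1 x hx.1,
     fun x hx y hy => ⟨hSsieve.2 x hx.1 y hy, hTsieve.2 x hx.2 y hy⟩⟩,
    V ∩ W, ⟨hkp, hVW, fun x hx => hVker hx.1⟩,
    fun x hx => ⟨hVS hx.1, hWT hx.2⟩⟩

/-- A point `p` with `k ∈ p⁻¹(0)` lies in the closure of a sieve `A` on `k` iff there is an
`S`-filter `𝒢` with `A ∈ 𝒢(k)` converging to `p`. -/
theorem lInClosure_iff_exists_filter_converges (J : LGrothendieckTopology L) (k : L)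
    (A : Set L) (hA : IsLSieve k A) (p : FrameHom L Prop) (hk : k ∈ LKernel p) :
    LInClosure J k A p ↔
      ∃ G : LSFilter L, A ∈ G.sieves k ∧ LConverges J G k p := by
  constructor
  · intro hcl
    -- the generated filter
    have hbot : ∀ T ∈ LNbhds J k p, ⊥ ∈ T ∩ A := by
      intro T hT
      obtain ⟨x, hxT, hxA⟩ := hcl T hT
      exact ⟨hT.1.2 x hxT ⊥ bot_le, hA.2 x hxA ⊥ bot_le⟩
    refine ⟨{ sieves := fun m =>
                {S | IsLSieve m S ∧ ∃ T ∈ LNbhds J k p, T ∩ A ∩ Set.Iic m ⊆ S}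
              sieve_mem := fun m S hS => hS.1
              mem_of_subset := fun m S hS R hR hSR =>
                ⟨hR, hS.2.choose, hS.2.choose_spec.1, fun x hx =>
                  hSR (hS.2.choose_spec.2 hx)⟩
              top_mem := fun m => ⟨⟨fun x hx => hx, fun x hx y hy => le_trans hy hx⟩,
                Set.Iic k, iic_mem_lNbhds J k p hk, fun x hx => hx.2⟩
              inter_mem := ?_
              stable := ?_
              empty_not_mem := ?_ }, ?_, ?_⟩
    · rintro m S R ⟨hSs, T1, hT1, hT1S⟩ ⟨hRs, T2, hT2, hT2R⟩
      refine ⟨⟨fun x hx => hSs.1 x hx.1,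
        fun x hx y hy => ⟨hSs.2 x hx.1 y hy, hRs.2 x hx.2 y hy⟩⟩,
        T1 ∩ T2, lNbhds_inter J k p hT1 hT2, fun x hx =>
          ⟨hT1S ⟨⟨hx.1.1.1, hx.1.2⟩, hx.2⟩, hT2R ⟨⟨hx.1.1.2, hx.1.2⟩, hx.2⟩⟩⟩
    · rintro m S ⟨hSs, T, hT, hTS⟩ n hnm
      refine ⟨⟨fun x hx => hx.2, fun x hx y hy =>
        ⟨hSs.2 x hx.1 y hy, le_trans hy hx.2⟩⟩,
        T, hT, fun x hx => ⟨hTS ⟨hx.1, le_trans hx.2 hnm⟩, hx.2⟩⟩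
    · rintro m ⟨_, T, hT, hTe⟩
      exact hTe ⟨hbot T hT, bot_le⟩
    · exact ⟨hA, Set.Iic k, iic_mem_lNbhds J k p hk, fun x hx => hx.1.2⟩
    · intro S hS
      exact ⟨hS.1, S, hS, fun x hx => hx.1.1⟩
  · rintro ⟨G, hAG, hconv⟩ S hS
    have hSA : S ∩ A ∈ G.sieves k := G.inter_mem k S A (hconv hS) hAG
    rcases Set.eq_empty_or_nonempty (S ∩ A) with he | hne
    · exact absurd (he ▸ hSA) (G.empty_not_mem k)
    · exact hne
end
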